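/- Disjoint monotonicity for Demon: For every hybrid game α and all sets of states X, Y, A, B ⊆ S, if Y ⊆ B and X ∩ Y = ∅, then δ_α(X,Y) ⊆ δ_α(A,B); here A may be an arbitrary set of states and A and B may overlap. -/
import Mathlib


open Set

/-- Hybrid games over a variable set `V`. Terms/ODE right-hand sides are
interpreted as functions from states `V → ℝ` to `ℝ`; tests and evolution
domain constraints are sets of states. -/
inductive Game (V : Type*) where
  | assign (x : V) (e : (V → ℝ) → ℝ)
  | ode (x : V) (f : (V → ℝ) → ℝ) (Q : Set (V → ℝ))
  | test (Q : Set (V → ℝ))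
  | choice (a b : Game V)
  | seq (a b : Game V)
  | dual (a : Game V)
  | star (a : Game V)

variable {V : Type*} [DecidableEq V]

/-- `φ : ℝ → (V → ℝ)` (restricted to `[0,r]`) is a solution of `x' = f(x) & Q`
of duration `r ≥ 0`: `t ↦ φ t x` is differentiable with derivative `f (φ s)`
at each `s ∈ [0,r]`, `φ s ∈ Q` on `[0,r]`, and all other variables stay
constant along `φ`. -/
def IsSolution (x : V) (f : (V → ℝ) → ℝ) (Q : Set (V → ℝ)) (r : ℝ)
    (φ : ℝ → (V → ℝ)) : Prop :=
  0 ≤ r ∧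
  (∀ s ∈ Set.Icc 0 r, HasDerivAt (fun t => φ t x) (f (φ s)) s) ∧
  (∀ s ∈ Set.Icc 0 r, φ s ∈ Q) ∧
  (∀ s ∈ Set.Icc 0 r, ∀ y, y ≠ x → φ s y = φ 0 y)

mutual
/-- Angel's semi-competitive winning region ς_α(X,Y). -/
def angel : Game V → Set (V → ℝ) → Set (V → ℝ) → Set (V → ℝ)
  | .assign x e, X, _ => {ω | Function.update ω x (e ω) ∈ X}
  | .ode x f Q, X, _ =>
      {ω | ∃ r φ, IsSolution x f Q r φ ∧ φ 0 = ω ∧ φ r ∈ X}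
  | .test Q, X, _ => Q ∩ X
  | .choice a b, X, Y => angel a X Y ∪ angel b X Y
  | .seq a b, X, Y => angel a (angel b X Y) (demon b X Y)
  | .dual a, X, Y => demon a Y X
  | .star a, X, Y =>
      ⋂₀ {Z | X ∪ angel a Z Zᶜ ⊆ Z} ∪
      ⋂₀ {Z | (X ∩ Y) ∪ (angel a Z Z ∩ demon a Z Z) ⊆ Z}

/-- Demon's semi-competitive winning region δ_α(X,Y). -/
def demon : Game V → Set (V → ℝ) → Set (V → ℝ) → Set (V → ℝ)
  | .assign x e, _, Y => {ω | Function.update ω x (e ω) ∈ Y}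
  | .ode x f Q, X, Y =>
      {ω | ∀ r φ, IsSolution x f Q r φ → φ 0 = ω → ∀ s ∈ Set.Icc 0 r, φ s ∈ Y} ∪
      {ω | ∃ r φ, IsSolution x f Q r φ ∧ φ 0 = ω ∧ ∃ s ∈ Set.Icc 0 r, φ s ∈ X ∩ Y}
  | .test Q, _, Y => Qᶜ ∪ Y
  | .choice a b, X, Y =>
      (demon a X Y ∩ demon b X Y) ∪ (demon a X Y ∩ angel a X Y) ∪
      (demon b X Y ∩ angel b X Y)
  | .seq a b, X, Y => demon a (angel b X Y) (demon b X Y)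
  | .dual a, X, Y => angel a Y X
  | .star a, X, Y =>
      ⋃₀ {Z | Z ⊆ Y ∩ demon a Zᶜ Z} ∪
      ⋂₀ {Z | (X ∩ Y) ∪ (angel a Z Z ∩ demon a Z Z) ⊆ Z}
end

/-- Angel's one-argument zero-sum dGL winning region ς_α(X). -/
def dglAngel : Game V → Set (V → ℝ) → Set (V → ℝ)
  | .assign x e, X => {ω | Function.update ω x (e ω) ∈ X}
  | .ode x f Q, X => {ω | ∃ r φ, IsSolution x f Q r φ ∧ φ 0 = ω ∧ φ r ∈ X}
  | .test Q, X => Q ∩ X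
  | .choice a b, X => dglAngel a X ∪ dglAngel b X
  | .seq a b, X => dglAngel a (dglAngel b X)
  | .dual a, X => (dglAngel a Xᶜ)ᶜ
  | .star a, X => ⋂₀ {Z | X ∪ dglAngel a Z ⊆ Z}

/-- Demon's one-argument zero-sum dGL winning region δ_α(X) = (ς_α(Xᶜ))ᶜ. -/
def dglDemon (g : Game V) (X : Set (V → ℝ)) : Set (V → ℝ) :=
  (dglAngel g Xᶜ)ᶜ

/-- Systematization α^{-d}: removes all dual operators. -/
def Game.sys : Game V → Game V
  | .assign x e => .assign x e
  | .ode x f Q => .ode x f Q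
  | .test Q => .test Q
  | .choice a b => .choice a.sys b.sys
  | .seq a b => .seq a.sys b.sys
  | .dual a => a.sys
  | .star a => .star a.sys

lemma key (α : Game V) :
    (∀ X Y : Set (V → ℝ), X ∩ Y = ∅ →
      ∀ ω, ω ∈ angel α X Y → ω ∈ demon α X Y → False) ∧
    (∀ X Y A B : Set (V → ℝ), X ⊆ A → X ∩ Y = ∅ → angel α X Y ⊆ angel α A B) ∧
    (∀ X Y A B : Set (V → ℝ), Y ⊆ B → X ∩ Y = ∅ → demon α X Y ⊆ demon α A B) := by
  induction α with
  | assign x e =>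
    refine ⟨?_, ?_, ?_⟩
    · intro X Y hXY ω ha hd
      simp only [angel, demon, mem_setOf_eq] at ha hd
      exact (Set.eq_empty_iff_forall_notMem.mp hXY) _ ⟨ha, hd⟩
    · intro X Y A B hXA _ ω h
      simp only [angel, mem_setOf_eq] at h ⊢; exact hXA h
    · intro X Y A B hYB _ ω h
      simp only [demon, mem_setOf_eq] at h ⊢; exact hYB h
  | ode x f Q =>
    refine ⟨?_, ?_, ?_⟩
    · intro X Y hXY ω ha hd
      simp only [angel, demon, mem_setOf_eq] at ha hd
      obtain ⟨r, φ, hsol, h0, hr⟩ := ha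
      rcases hd with hd | hd
      · have : φ r ∈ Y := hd r φ hsol h0 r ⟨hsol.1, le_refl r⟩
        exact (Set.eq_empty_iff_forall_notMem.mp hXY) _ ⟨hr, this⟩
      · obtain ⟨r', φ', hsol', h0', s, hs, hmem⟩ := hd
        rw [hXY] at hmem; exact hmem
    · intro X Y A B hXA _ ω h
      simp only [angel, mem_setOf_eq] at h ⊢
      obtain ⟨r, φ, hsol, h0, hr⟩ := h
      exact ⟨r, φ, hsol, h0, hXA hr⟩
    · intro X Y A B hYB hXY ω h
      simp only [demon, mem_setOf_eq] at h ⊢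
      rcases h with h | h
      · exact Or.inl fun r φ hs h0 s hsm => hYB (h r φ hs h0 s hsm)
      · obtain ⟨r, φ, hsol, h0, s, hs, hmem⟩ := h
        rw [hXY] at hmem; exact absurd hmem (notMem_empty _)
  | test Q =>
    refine ⟨?_, ?_, ?_⟩
    · intro X Y hXY ω ha hd
      simp only [angel, demon, mem_inter_iff, mem_union, mem_compl_iff] at ha hd
      rcases hd with hd | hd
      · exact hd ha.1
      · exact (Set.eq_empty_iff_forall_notMem.mp hXY) _ ⟨ha.2, hd⟩
    · intro X Y A B hXA _ ω h
      simp only [angel, mem_inter_iff] at h ⊢; exact ⟨h.1, hXA h.2⟩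
    · intro X Y A B hYB _ ω h
      simp only [demon, mem_union] at h ⊢
      exact h.imp id fun hy => hYB hy
  | choice a b iha ihb =>
    refine ⟨?_, ?_, ?_⟩
    · intro X Y hXY ω ha hd
      simp only [angel, demon, mem_union, mem_inter_iff] at ha hd
      rcases hd with (⟨h1, h2⟩ | ⟨h1, h2⟩) | ⟨h1, h2⟩
      · rcases ha with ha | ha
        · exact iha.1 X Y hXY ω ha h1
        · exact ihb.1 X Y hXY ω ha h2
      · exact iha.1 X Y hXY ω h2 h1
      · exact ihb.1 X Y hXY ω h2 h1
    · intro X Y A B hXA hXY ω h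
      simp only [angel, mem_union] at h ⊢
      exact h.imp (fun h => iha.2.1 X Y A B hXA hXY h)
        (fun h => ihb.2.1 X Y A B hXA hXY h)
    · intro X Y A B hYB hXY ω h
      simp only [demon, mem_union, mem_inter_iff] at h ⊢
      rcases h with (⟨h1, h2⟩ | ⟨h1, h2⟩) | ⟨h1, h2⟩
      · exact Or.inl (Or.inl ⟨iha.2.2 X Y A B hYB hXY h1, ihb.2.2 X Y A B hYB hXY h2⟩)
      · exact absurd (iha.1 X Y hXY ω h2 h1) not_false
      · exact absurd (ihb.1 X Y hXY ω h2 h1) not_false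
  | seq a b iha ihb =>
    have hdisj : ∀ X Y : Set (V → ℝ), X ∩ Y = ∅ →
        angel b X Y ∩ demon b X Y = ∅ := by
      intro X Y hXY
      exact Set.eq_empty_iff_forall_notMem.mpr fun ω ⟨h1, h2⟩ => ihb.1 X Y hXY ω h1 h2
    refine ⟨?_, ?_, ?_⟩
    · intro X Y hXY ω ha hd
      simp only [angel, demon] at ha hd
      exact iha.1 _ _ (hdisj X Y hXY) ω ha hd
    · intro X Y A B hXA hXY ω h
      simp only [angel] at h ⊢
      exact iha.2.1 _ _ _ _ (ihb.2.1 X Y A B hXA hXY) (hdisj X Y hXY) h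
    · intro X Y A B hYB hXY ω h
      simp only [demon] at h ⊢
      exact iha.2.2 _ _ _ _ (ihb.2.2 X Y A B hYB hXY) (hdisj X Y hXY) h
  | dual a iha =>
    refine ⟨?_, ?_, ?_⟩
    · intro X Y hXY ω ha hd
      simp only [angel, demon] at ha hd
      exact iha.1 Y X (by rw [inter_comm]; exact hXY) ω hd ha
    · intro X Y A B hXA hXY ω h
      simp only [angel] at h ⊢
      exact iha.2.2 Y X B A hXA (by rw [inter_comm]; exact hXY) h
    · intro X Y A B hYB hXY ω h
      simp only [demon] at h ⊢
      exact iha.2.1 Y X B A hYB (by rw [inter_comm]; exact hXY) h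
  | star a iha =>
    have hdisja : ∀ X Y : Set (V → ℝ), X ∩ Y = ∅ →
        angel a X Y ∩ demon a X Y = ∅ := by
      intro X Y hXY
      exact Set.eq_empty_iff_forall_notMem.mpr fun ω ⟨h1, h2⟩ => iha.1 X Y hXY ω h1 h2
    have hI2 : ∀ X Y : Set (V → ℝ), X ∩ Y = ∅ →
        (∅ : Set (V → ℝ)) ∈ {Z | (X ∩ Y) ∪ (angel a Z Z ∩ demon a Z Z) ⊆ Z} := by
      intro X Y hXY
      simp only [mem_setOf_eq, hXY, empty_union]
      rw [hdisja ∅ ∅ (by simp)]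
    refine ⟨?_, ?_, ?_⟩
    · intro X Y hXY ω ha hd
      simp only [angel, demon, mem_union] at ha hd
      have hne : ω ∉ ⋂₀ {Z | (X ∩ Y) ∪ (angel a Z Z ∩ demon a Z Z) ⊆ Z} := by
        intro hmem
        exact (hmem ∅ (hI2 X Y hXY) : ω ∈ (∅ : Set (V → ℝ)))
      rcases ha with ha | ha
      · rcases hd with hd | hd
        · obtain ⟨W, hW, hωW⟩ := hd
          simp only [mem_setOf_eq] at hW
          have hWc : Wᶜ ∈ {Z | X ∪ angel a Z Zᶜ ⊆ Z} := by
            simp only [mem_setOf_eq, compl_compl]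
            intro z hz
            rcases hz with hz | hz
            · intro hzW
              exact (Set.eq_empty_iff_forall_notMem.mp hXY) z ⟨hz, (hW hzW).1⟩
            · intro hzW
              exact iha.1 Wᶜ W (compl_inter_self W) z hz (hW hzW).2
          exact (ha Wᶜ hWc) hωW
        · exact hne hd
      · exact hne ha
    · intro X Y A B hXA hXY ω h
      simp only [angel, mem_union] at h ⊢
      rcases h with h | h
      · refine Or.inl fun Z hZ => h Z ?_
        simp only [mem_setOf_eq] at hZ ⊢
        exact (union_subset_union_left _ hXA).trans hZ
      · refine Or.inr fun Z hZ => h Z ?_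
        simp only [mem_setOf_eq, hXY, empty_union] at hZ ⊢
        exact subset_union_right.trans hZ
    · intro X Y A B hYB hXY ω h
      simp only [demon, mem_union] at h ⊢
      rcases h with h | h
      · obtain ⟨W, hW, hωW⟩ := h
        simp only [mem_setOf_eq] at hW
        refine Or.inl ⟨W, ?_, hωW⟩
        simp only [mem_setOf_eq]
        exact hW.trans (inter_subset_inter_left _ hYB)
      · refine Or.inr fun Z hZ => h Z ?_
        simp only [mem_setOf_eq, hXY, empty_union] at hZ ⊢
        exact subset_union_right.trans hZ

/-- Disjoint monotonicity for Demon: if `Y ⊆ B` and `X ∩ Y = ∅`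
then `δ_α(X,Y) ⊆ δ_α(A,B)` for arbitrary `A`. -/
theorem disjoint_monotonicity_demon (α : Game V) (X Y A B : Set (V → ℝ))
    (hYB : Y ⊆ B) (hXY : X ∩ Y = ∅) :
    demon α X Y ⊆ demon α A B := by
  exact (key α).2.2 X Y A B hYB hXY
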